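/- Bound on the boundary cell velocity: let μ > 0, k > 0, α* ∈ (0,1), L > 0 and s < 0. Suppose α, u : [0, L] → ℝ are continuously differentiable with α_ℓ ≤ α(x) ≤ α_u for constants 0 < α_ℓ ≤ α_u < 1, the map x ↦ α(x) u′(x) is differentiable, −μ (α u′)′ + k α u/(1−α) = −(α Σ(α))′ on (0, L), u(0) = 0, u(L) ≥ 0, and μ u′(L) − Σ(α(L)) = s. Then u(L) ≤ (L / (μ α_ℓ² |s|)) · (α_u (α_u − α*)⁺ / (1 − α_u)²)². -/

import Mathlib

/-- Cell–cell interaction pressure `Σ(α) = (α − α*)⁺ / (1 − α)²`. -/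
noncomputable def cellPressure (αstar a : ℝ) : ℝ := max (a - αstar) 0 / (1 - a) ^ 2

/-!
Write `τ = α (μ u' − Σ(α))` for the cell stress, so that the momentum equation reads
`τ' = k α u / (1 − α)` and the boundary condition reads `τ(L) = α(L) s`. Then
`(τ u)' = k α u² / (1 − α) + μ α u'² − α Σ(α) u'`, and by Young's inequality together with the
monotonicity of `a ↦ a Σ(a)` this is at least `−C` with `C = (α_u Σ(α_u))² / (4 μ α_ℓ)`.
Integrating over `[0, L]` and using `u(0) = 0` gives `α(L) |s| u(L) ≤ C L`.
-/

open Set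

theorem cellPressure_nonneg (αstar a : ℝ) : 0 ≤ cellPressure αstar a :=
  div_nonneg (le_max_right _ _) (sq_nonneg _)

theorem mul_cellPressure_monotoneOn (αstar : ℝ) :
    MonotoneOn (fun a => a * cellPressure αstar a) (Ico 0 1) := by
  rintro a - b ⟨hb0, hb1⟩ hab
  simp only [cellPressure, ← mul_div_assoc]
  gcongr

theorem mul_sub_mul_sq_le_sq_div {c : ℝ} (hc : 0 < c) (p y : ℝ) :
    p * y - c * y ^ 2 ≤ p ^ 2 / (4 * c) := by
  rw [le_div_iff₀ (by positivity)]
  nlinarith [sq_nonneg (p - 2 * c * y)]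

theorem mul_sub_le_sub_of_hasDerivAt {f f' : ℝ → ℝ} {a b C : ℝ} (hab : a < b)
    (hf : ∀ x ∈ Icc a b, HasDerivAt f (f' x) x) (hC : ∀ x ∈ Ioo a b, C ≤ f' x) :
    C * (b - a) ≤ f b - f a := by
  obtain ⟨c, hc, hslope⟩ := exists_hasDerivAt_eq_slope f f' hab
    (fun x hx => (hf x hx).continuousAt.continuousWithinAt)
    (fun x hx => hf x (Ioo_subset_Icc_self hx))
  exact (le_div_iff₀ (sub_pos.2 hab)).1 (hslope ▸ hC c hc)

theorem neg_sq_div_le_drag_add_stress_mul {μ k αstar αl αu a y z : ℝ} (hμ : 0 < μ)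
    (hk : 0 ≤ k) (hαl : 0 < αl) (hαla : αl ≤ a) (haαu : a ≤ αu) (hαu : αu < 1) :
    -((αu * cellPressure αstar αu) ^ 2 / (4 * μ * αl))
      ≤ k * a * z / (1 - a) * z + (μ * (a * y) - a * cellPressure αstar a) * y := by
  have ha : 0 < a := hαl.trans_le hαla
  have hdrag : 0 ≤ k * a * z / (1 - a) * z := by
    rw [div_mul_eq_mul_div, mul_assoc, ← sq]
    exact div_nonneg (by positivity) (by linarith)
  have hyoung := mul_sub_mul_sq_le_sq_div (mul_pos hμ ha) (a * cellPressure αstar a) y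
  have hpressure : (a * cellPressure αstar a) ^ 2 / (4 * (μ * a))
      ≤ (αu * cellPressure αstar αu) ^ 2 / (4 * μ * αl) := by
    have hmono := mul_cellPressure_monotoneOn αstar ⟨ha.le, by linarith⟩ ⟨by linarith, hαu⟩ haαu
    have hnonneg := cellPressure_nonneg αstar a
    rw [← mul_assoc]
    gcongr
  linarith

theorem boundary_velocity_bound_general
    (μ k αstar L s αl αu : ℝ)
    (hμ : 0 < μ) (hk : 0 < k) (hL : 0 < L)
    (hs : s < 0)
    (hαl : 0 < αl) (hαu : αu < 1)
    (α u u' w v : ℝ → ℝ)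
    (hu : ∀ x ∈ Set.Icc 0 L, HasDerivAt u (u' x) x)
    (hαrange : ∀ x ∈ Set.Icc 0 L, αl ≤ α x ∧ α x ≤ αu)
    (hw : ∀ x ∈ Set.Icc 0 L, HasDerivAt (fun y => α y * u' y) (w x) x)
    (hv : ∀ x ∈ Set.Icc 0 L,
      HasDerivAt (fun y => α y * cellPressure αstar (α y)) (v x) x)
    (heq : ∀ x ∈ Set.Ioo 0 L,
      -μ * w x + k * α x * u x / (1 - α x) = -v x)
    (hu0 : u 0 = 0) (huL : 0 ≤ u L)
    (hbc : μ * u' L - cellPressure αstar (α L) = s) :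
    u L ≤ (L / (μ * αl ^ 2 * |s|))
      * (αu * max (αu - αstar) 0 / (1 - αu) ^ 2) ^ 2 := by
  set τ : ℝ → ℝ := fun x => μ * (α x * u' x) - α x * cellPressure αstar (α x)
  set C := (αu * cellPressure αstar αu) ^ 2 / (4 * μ * αl)
  have henergy : -C * (L - 0) ≤ τ L * u L - τ 0 * u 0 := by
    refine mul_sub_le_sub_of_hasDerivAt hL
      (fun x hx => (((hw x hx).const_mul μ).sub (hv x hx)).mul (hu x hx)) fun x hx => ?_
    have hαx := hαrange x (Ioo_subset_Icc_self hx)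
    have hdrag : μ * w x - v x = k * α x * u x / (1 - α x) := by linarith [heq x hx]
    rw [hdrag]
    exact neg_sq_div_le_drag_add_stress_mul hμ hk.le hαl hαx.1 hαx.2 hαu
  have hτL : τ L = α L * s := by rw [← hbc]; ring
  have hαL := (hαrange L (right_mem_Icc.2 hL.le)).1
  have hC : αl * |s| * u L ≤ L * C := by
    rw [hτL, hu0] at henergy
    rw [abs_of_neg hs]
    linarith [mul_nonneg (mul_nonneg (sub_nonneg.2 hαL) (neg_nonneg.2 hs.le)) huL]
  have hM : αu * max (αu - αstar) 0 / (1 - αu) ^ 2 = αu * cellPressure αstar αu :=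
    mul_div_assoc ..
  rw [hM, div_mul_eq_mul_div, le_div_iff₀ (mul_pos (by positivity) (abs_pos.2 hs.ne))]
  calc u L * (μ * αl ^ 2 * |s|) = αl * |s| * u L * (μ * αl) := by ring
    _ ≤ L * C * (μ * αl) := by gcongr
    _ = L * (αu * cellPressure αstar αu) ^ 2 / 4 := by simp only [C]; field_simp
    _ ≤ L * (αu * cellPressure αstar αu) ^ 2 := by
      have : 0 ≤ L * (αu * cellPressure αstar αu) ^ 2 := by positivity
      linarith

/-- Bound on the boundary cell velocity for a strictly compressive hydrogel stress `s < 0`. -/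
theorem boundary_velocity_bound
    (μ k αstar L s αl αu : ℝ)
    (hμ : 0 < μ) (hk : 0 < k) (hαstar : αstar ∈ Set.Ioo (0 : ℝ) 1) (hL : 0 < L)
    (hs : s < 0)
    (hαl : 0 < αl) (hαlu : αl ≤ αu) (hαu : αu < 1)
    (α u α' u' w v : ℝ → ℝ)
    (hα : ∀ x ∈ Set.Icc 0 L, HasDerivAt α (α' x) x)
    (hαc : ContinuousOn α' (Set.Icc 0 L))
    (hu : ∀ x ∈ Set.Icc 0 L, HasDerivAt u (u' x) x)
    (huc : ContinuousOn u' (Set.Icc 0 L))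
    (hαrange : ∀ x ∈ Set.Icc 0 L, αl ≤ α x ∧ α x ≤ αu)
    (hw : ∀ x ∈ Set.Icc 0 L, HasDerivAt (fun y => α y * u' y) (w x) x)
    (hv : ∀ x ∈ Set.Icc 0 L,
      HasDerivAt (fun y => α y * cellPressure αstar (α y)) (v x) x)
    (heq : ∀ x ∈ Set.Ioo 0 L,
      -μ * w x + k * α x * u x / (1 - α x) = -v x)
    (hu0 : u 0 = 0) (huL : 0 ≤ u L)
    (hbc : μ * u' L - cellPressure αstar (α L) = s) :
    u L ≤ (L / (μ * αl ^ 2 * |s|))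
      * (αu * max (αu - αstar) 0 / (1 - αu) ^ 2) ^ 2 :=
  boundary_velocity_bound_general μ k αstar L s αl αu hμ hk hL hs hαl hαu α u u' w v hu hαrange hw
    hv heq hu0 huL hbc
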